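/- Work in the coordinates (x,u,v) on ℝ³, where u = (t+y)/2 and v = (t−y)/2. Let μ ∈ ℂ with Im μ ≠ 0, let J : ℝ³ → U(N) be smooth and let R : ℝ³ → M_N(ℂ) be a smooth map with R* = R and R² = R pointwise, satisfying the Bäcklund relations in null coordinates: (μ R_x − R_u + R J⁻¹J_u)(1 − R) = 0 and (μ R_v − R_x + R J⁻¹J_x)(1 − R) = 0. Then for every real s ≠ 0 the boosted maps J'(x,u,v) = J(x, su, s⁻¹v) and R'(x,u,v) = R(x, su, s⁻¹v) satisfy the same two Bäcklund relations with the parameter μ replaced by sμ. -/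

import Mathlib

open Matrix Complex

attribute [local instance] Matrix.frobeniusNormedAddCommGroup Matrix.frobeniusNormedSpace

/-- Partial derivative in the `i`-th coordinate direction of `ℝ³` with the null
coordinates `p = (x, u, v)`, `u = (t+y)/2`, `v = (t−y)/2` (`i = 0,1,2` for `x,u,v`). -/
noncomputable def pd {N : ℕ} (i : Fin 3) (f : (Fin 3 → ℝ) → Matrix (Fin N) (Fin N) ℂ)
    (p : Fin 3 → ℝ) : Matrix (Fin N) (Fin N) ℂ :=
  fderiv ℝ f p (Pi.single i 1)

/-- `J⁻¹ ∂ₐJ`. -/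
noncomputable def lmc {N : ℕ} (a : Fin 3) (J : (Fin 3 → ℝ) → Matrix (Fin N) (Fin N) ℂ)
    (p : Fin 3 → ℝ) : Matrix (Fin N) (Fin N) ℂ :=
  (J p)⁻¹ * pd a J p

/-- The Bäcklund relations in the null coordinates `(x,u,v)`:
`(μR_x − R_u + RJ⁻¹J_u)(1−R) = 0` and `(μR_v − R_x + RJ⁻¹J_x)(1−R) = 0`. -/
def BacklundNull {N : ℕ} (μ : ℂ) (J R : (Fin 3 → ℝ) → Matrix (Fin N) (Fin N) ℂ) : Prop :=
  ∀ p,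
    (μ • pd 0 R p - pd 1 R p + R p * lmc 1 J p) * (1 - R p) = 0
    ∧ (μ • pd 2 R p - pd 0 R p + R p * lmc 0 J p) * (1 - R p) = 0

/-- The boost as a continuous linear map on `ℝ³`. -/
noncomputable def phiL (s : ℝ) : (Fin 3 → ℝ) →L[ℝ] (Fin 3 → ℝ) :=
  ContinuousLinearMap.pi ![ContinuousLinearMap.proj 0, s • ContinuousLinearMap.proj 1,
    s⁻¹ • ContinuousLinearMap.proj 2]

lemma phiL_apply (s : ℝ) (p : Fin 3 → ℝ) : phiL s p = ![p 0, s * p 1, s⁻¹ * p 2] := by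
  funext i
  fin_cases i <;> simp [phiL]

lemma real_smul_mat {N : ℕ} (r : ℝ) (A : Matrix (Fin N) (Fin N) ℂ) :
    r • A = (r : ℂ) • A := by
  ext i j
  simp [Matrix.smul_apply, Complex.real_smul]

lemma pd_comp {N : ℕ} (s : ℝ) (f : (Fin 3 → ℝ) → Matrix (Fin N) (Fin N) ℂ)
    (hf : Differentiable ℝ f) (i : Fin 3) (p : Fin 3 → ℝ) :
    pd i (fun q => f ![q 0, s * q 1, s⁻¹ * q 2]) p
      = ((![1, s, s⁻¹] i : ℝ) : ℂ) • pd i f ![p 0, s * p 1, s⁻¹ * p 2] := by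
  have h : (fun q => f ![q 0, s * q 1, s⁻¹ * q 2]) = f ∘ (phiL s) := by
    funext q; simp [phiL_apply]
  have hsingle : (phiL s) (Pi.single i 1)
      = (![1, s, s⁻¹] i) • (Pi.single i 1 : Fin 3 → ℝ) := by
    rw [phiL_apply]
    funext j
    fin_cases i <;> fin_cases j <;> simp [Pi.single_apply]
  rw [pd, h]
  erw [fderiv_comp (g := f) p (hf _) (phiL s).differentiableAt]
  erw [ContinuousLinearMap.fderiv, ContinuousLinearMap.comp_apply, hsingle, _root_.map_smul,
    real_smul_mat, phiL_apply]
  rfl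

/-- if `(J, R)` satisfy the Bäcklund relations in null coordinates with
parameter `μ`, then for any real `s ≠ 0` the boosted maps `J'(x,u,v) = J(x,su,s⁻¹v)`,
`R'(x,u,v) = R(x,su,s⁻¹v)` satisfy the Bäcklund relations with parameter `sμ`. -/
theorem boost_backlund {N : ℕ}
    (μ : ℂ) (hμ : μ.im ≠ 0)
    (J R : (Fin 3 → ℝ) → Matrix (Fin N) (Fin N) ℂ)
    (hJsmooth : ContDiff ℝ (⊤ : ℕ∞) J) (hRsmooth : ContDiff ℝ (⊤ : ℕ∞) R)
    (hJunitary : ∀ p, J p ∈ Matrix.unitaryGroup (Fin N) ℂ)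
    (hRherm : ∀ p, (R p)ᴴ = R p) (hRproj : ∀ p, R p * R p = R p)
    (hBack : BacklundNull μ J R)
    (s : ℝ) (hs : s ≠ 0)
    (J' R' : (Fin 3 → ℝ) → Matrix (Fin N) (Fin N) ℂ)
    (hJ' : J' = fun p => J ![p 0, s * p 1, s⁻¹ * p 2])
    (hR' : R' = fun p => R ![p 0, s * p 1, s⁻¹ * p 2]) :
    BacklundNull ((s : ℂ) * μ) J' R' := by
  have hJd : Differentiable ℝ J := hJsmooth.differentiable (by simp)
  have hRd : Differentiable ℝ R := hRsmooth.differentiable (by simp)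
  have hsC : (s : ℂ) ≠ 0 := by exact_mod_cast hs
  subst hJ' hR'
  intro p
  set q : Fin 3 → ℝ := ![p 0, s * p 1, s⁻¹ * p 2] with hq
  have hpdR : ∀ i, pd i (fun q => R ![q 0, s * q 1, s⁻¹ * q 2]) p
      = ((![1, s, s⁻¹] i : ℝ) : ℂ) • pd i R q := fun i => pd_comp s R hRd i p
  have hpdJ : ∀ i, pd i (fun q => J ![q 0, s * q 1, s⁻¹ * q 2]) p
      = ((![1, s, s⁻¹] i : ℝ) : ℂ) • pd i J q := fun i => pd_comp s J hJd i p
  have hlmc : ∀ i, lmc i (fun q => J ![q 0, s * q 1, s⁻¹ * q 2]) p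
      = ((![1, s, s⁻¹] i : ℝ) : ℂ) • lmc i J q := by
    intro i
    simp only [lmc, hpdJ i, Matrix.mul_smul]
    rfl
  obtain ⟨h1, h2⟩ := hBack q
  have c0 : ((![1, s, s⁻¹] 0 : ℝ) : ℂ) = 1 := by norm_num
  have c1 : ((![1, s, s⁻¹] 1 : ℝ) : ℂ) = (s : ℂ) := by norm_num
  have c2 : ((![1, s, s⁻¹] 2 : ℝ) : ℂ) = (s : ℂ)⁻¹ := by
    simp [Matrix.cons_val_fin_one]
  constructor
  · simp only [hpdR, hlmc, c0, c1, one_smul, ← hq]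
    have key : ((↑s * μ) • pd 0 R q - (↑s : ℂ) • pd 1 R q
        + R q * ((↑s : ℂ) • lmc 1 J q)) * (1 - R q)
        = (↑s : ℂ) • ((μ • pd 0 R q - pd 1 R q + R q * lmc 1 J q) * (1 - R q)) := by
      rw [mul_smul, Matrix.mul_smul, ← smul_sub, ← smul_add, smul_mul_assoc]
    rw [key, h1, smul_zero]
  · simp only [hpdR, hlmc, c0, c2, one_smul, ← hq]
    have hcomb : ((↑s : ℂ) * μ) • ((↑s : ℂ)⁻¹ • pd 2 R q) = μ • pd 2 R q := by
      rw [smul_smul]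
      congr 1
      field_simp
    rw [hcomb]
    exact h2
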